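/- arXiv:2411.10401 — 3 statements merged into one kernel-verified Lean document; each statement's English description precedes it below -/
import Mathlib

section
/- Let n ≥ 1, let (λ̄_j)_{j∈ℕ} be a sequence in ℝⁿ and (w_j)_{j∈ℕ} nonnegative real numbers. Let β : ℝⁿ → ℝ be nonnegative, and suppose there is ε₀ > 0 with β(τ̄) ≥ 1/2 whenever max_{1≤k≤n} |τ_k| ≤ ε₀. Let S ⊆ ℝⁿ, let m̄ = (m₁,…,mₙ) ∈ [0,∞)ⁿ and C > 0, and assume that ∑_{j=0}^∞ β(λ̄_j − μ̄) w_j ≤ C ∏_{k=1}^n (1+|μ_k|)^{m_k} for every μ̄ ∈ ℝⁿ whose Euclidean distance to S is at most √n. Then there exists C′ > 0, depending only on n, ε₀, C and m̄, such that for every μ̄ ∈ S one has ∑_{j : λ̄_j ∈ R_{μ̄}} w_j ≤ C′ ∏_{k=1}^n (1+|μ_k|)^{m_k}. -/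
/-!
Fix once and for all a finite ε₀-net `T` of the unit cube `[0,1]ⁿ` for the sup-distance; its
size depends only on `n` and `ε₀`. If `λ̄ ∈ R_μ̄`, then `λ̄ - μ̄` lies in the cube, so some
`c ∈ T` has `β(λ̄ - (μ̄ + c)) ≥ 1/2`. Hence the sharp sum over `R_μ̄` is at most twice the sum
over `c ∈ T` of the smoothed sums at the points `μ̄ + c`. These points lie within `√n` of
`μ̄ ∈ S`, and `1 + |μ_k + c_k| ≤ 2 (1 + |μ_k|)`, so each smoothed sum is at most
`C ∏ 2^{m_k} (1 + |μ_k|)^{m_k}`.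
-/

open scoped ENNReal
open Set

lemma exists_finset_unitCube_net {ι : Type*} [Fintype ι] {ε : ℝ} (hε : 0 < ε) :
    ∃ T : Finset (ι → ℝ), T.Nonempty ∧ (∀ c ∈ T, ∀ k, |c k| ≤ 1) ∧
      ∀ y ∈ Icc (0 : ι → ℝ) 1, ∃ c ∈ T, ∀ k, |y k - c k| < ε := by
  obtain ⟨T, hT_cube, hT_fin, hT_cover⟩ :=
    (isCompact_Icc (a := (0 : ι → ℝ)) (b := 1)).finite_cover_balls hε
  obtain ⟨T, rfl⟩ := hT_fin.exists_finset_coe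
  have hcover : ∀ y ∈ Icc (0 : ι → ℝ) 1, ∃ c ∈ T, ∀ k, |y k - c k| < ε := fun y hy => by
    obtain ⟨c, hc, hyc⟩ := mem_iUnion₂.mp (hT_cover hy)
    exact ⟨c, hc, fun k => by simpa [Real.dist_eq] using (dist_pi_lt_iff hε).mp hyc k⟩
  refine ⟨T, ?_, fun c hc k => ?_, hcover⟩
  · obtain ⟨c, hc, -⟩ := hcover 0 (left_mem_Icc.mpr zero_le_one)
    exact ⟨c, hc⟩
  · obtain ⟨hc0, hc1⟩ := hT_cube hc
    exact abs_le.mpr ⟨(neg_nonpos.mpr zero_le_one).trans (hc0 k), hc1 k⟩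

lemma norm_le_sqrt_card_of_abs_le_one {ι : Type*} [Fintype ι] {x : EuclideanSpace ℝ ι}
    (hx : ∀ k, |x k| ≤ 1) : ‖x‖ ≤ √(Fintype.card ι) := by
  rw [EuclideanSpace.norm_eq]
  gcongr
  calc ∑ k, ‖x k‖ ^ 2 ≤ ∑ _k : ι, (1 : ℝ) := by
        gcongr with k
        rw [Real.norm_eq_abs, sq_le_one_iff_abs_le_one, abs_abs]
        exact hx k
    _ = Fintype.card ι := by simp

lemma infDist_add_le_sqrt_card {ι : Type*} [Fintype ι] {S : Set (EuclideanSpace ℝ ι)}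
    {μ x : EuclideanSpace ℝ ι} (hμ : μ ∈ S) (hx : ∀ k, |x k| ≤ 1) :
    Metric.infDist (μ + x) S ≤ √(Fintype.card ι) := by
  calc Metric.infDist (μ + x) S ≤ dist (μ + x) μ := Metric.infDist_le_dist_of_mem hμ
    _ = ‖x‖ := dist_self_add_left x μ
    _ ≤ √(Fintype.card ι) := norm_le_sqrt_card_of_abs_le_one hx

lemma one_add_abs_rpow_le {a b p : ℝ} (hab : |a - b| ≤ 1) (hp : 0 ≤ p) :
    (1 + |a|) ^ p ≤ 2 ^ p * (1 + |b|) ^ p := by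
  rw [← Real.mul_rpow zero_le_two (by positivity)]
  have ha : |a| ≤ |b| + 1 := by
    have := abs_sub_abs_le_abs_sub a b
    linarith
  gcongr
  linarith [abs_nonneg b]

lemma prod_one_add_abs_rpow_le {ι : Type*} (s : Finset ι) {a b p : ι → ℝ}
    (hab : ∀ k ∈ s, |a k - b k| ≤ 1) (hp : ∀ k ∈ s, 0 ≤ p k) :
    ∏ k ∈ s, (1 + |a k|) ^ p k ≤ (∏ k ∈ s, (2 : ℝ) ^ p k) * ∏ k ∈ s, (1 + |b k|) ^ p k := by
  rw [← Finset.prod_mul_distrib]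
  exact Finset.prod_le_prod (fun _ _ => by positivity)
    fun k hk => one_add_abs_rpow_le (hab k hk) (hp k hk)

lemma ENNReal.inv_two_le_ofReal {x : ℝ} (hx : 1 / 2 ≤ x) : 2⁻¹ ≤ ENNReal.ofReal x := by
  calc (2⁻¹ : ℝ≥0∞) = ENNReal.ofReal (1 / 2) := by
        rw [one_div, ENNReal.ofReal_inv_of_pos two_pos, ENNReal.ofReal_ofNat]
    _ ≤ ENNReal.ofReal x := ENNReal.ofReal_le_ofReal hx

lemma tsum_indicator_le_two_mul_sum_tsum {α ι : Type*} {A : Set α} (s : Finset ι)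
    (φ : ι → α → ℝ≥0∞) (w : α → ℝ≥0∞) (hcover : ∀ j ∈ A, ∃ i ∈ s, 2⁻¹ ≤ φ i j) :
    ∑' j, A.indicator w j ≤ 2 * ∑ i ∈ s, ∑' j, φ i j * w j := by
  have hpoint : ∀ j, A.indicator w j ≤ ∑ i ∈ s, 2 * (φ i j * w j) := by
    intro j
    by_cases hj : j ∈ A
    · obtain ⟨i, hi, hφ⟩ := hcover j hj
      calc A.indicator w j = 2 * 2⁻¹ * w j := by
            rw [indicator_of_mem hj, ENNReal.mul_inv_cancel two_ne_zero ENNReal.ofNat_ne_top,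
              one_mul]
        _ ≤ 2 * (φ i j * w j) := by rw [mul_assoc]; gcongr
        _ ≤ ∑ i ∈ s, 2 * (φ i j * w j) :=
          Finset.single_le_sum (f := fun i => 2 * (φ i j * w j)) (fun _ _ => zero_le) hi
    · simp [indicator_of_notMem hj]
  calc ∑' j, A.indicator w j ≤ ∑' j, ∑ i ∈ s, 2 * (φ i j * w j) := ENNReal.tsum_le_tsum hpoint
    _ = 2 * ∑ i ∈ s, ∑' j, φ i j * w j := by
      rw [Summable.tsum_finsetSum fun _ _ => ENNReal.summable, Finset.mul_sum]
      simp only [ENNReal.tsum_mul_left]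

open scoped ENNReal in
theorem smoothed_to_unit_box_bound_general (n : ℕ)
    (lamb : ℕ → EuclideanSpace ℝ (Fin n)) (w : ℕ → ℝ≥0∞)
    (β : EuclideanSpace ℝ (Fin n) → ℝ)
    (ε₀ : ℝ) (hε₀ : 0 < ε₀)
    (hβhalf : ∀ τ : EuclideanSpace ℝ (Fin n), (∀ k, |τ k| ≤ ε₀) → (1 / 2 : ℝ) ≤ β τ)
    (S : Set (EuclideanSpace ℝ (Fin n))) (m : Fin n → ℝ) (hm : ∀ k, 0 ≤ m k)
    (C : ℝ) (hC : 0 < C)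
    (hsmooth : ∀ μ : EuclideanSpace ℝ (Fin n), Metric.infDist μ S ≤ Real.sqrt n →
      (∑' j, ENNReal.ofReal (β (lamb j - μ)) * w j) ≤
        ENNReal.ofReal (C * ∏ k, (1 + |μ k|) ^ (m k))) :
    ∃ C' > (0 : ℝ), ∀ μ ∈ S,
      (∑' j, Set.indicator {j : ℕ | ∀ k, lamb j k ∈ Set.Icc (μ k) (μ k + 1)} w j) ≤
        ENNReal.ofReal (C' * ∏ k, (1 + |μ k|) ^ (m k)) := by
  obtain ⟨T, hT, hT_small, hT_net⟩ := exists_finset_unitCube_net (ι := Fin n) hε₀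
  set K := C * ∏ k, (2 : ℝ) ^ m k
  refine ⟨2 * T.card * K, by positivity, fun μ hμ => ?_⟩
  set ν : (Fin n → ℝ) → EuclideanSpace ℝ (Fin n) := fun c => μ + WithLp.toLp 2 c
  have hsmooth_ν : ∀ c ∈ T, ∑' j, ENNReal.ofReal (β (lamb j - ν c)) * w j ≤
      ENNReal.ofReal (K * ∏ k, (1 + |μ k|) ^ m k) := fun c hc => by
    refine (hsmooth (ν c) ?_).trans (ENNReal.ofReal_le_ofReal ?_)
    · simpa using infDist_add_le_sqrt_card (x := WithLp.toLp 2 c) hμ (hT_small c hc)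
    · rw [mul_assoc]
      gcongr
      exact prod_one_add_abs_rpow_le _ (fun k _ => by simpa [ν] using hT_small c hc k)
        fun k _ => hm k
  have hcover : ∀ j ∈ {j | ∀ k, lamb j k ∈ Icc (μ k) (μ k + 1)},
      ∃ c ∈ T, 2⁻¹ ≤ ENNReal.ofReal (β (lamb j - ν c)) := fun j hj => by
    obtain ⟨c, hc, hclose⟩ := hT_net (fun k => lamb j k - μ k)
      ⟨fun k => sub_nonneg.mpr (hj k).1, fun k => sub_le_iff_le_add'.mpr (hj k).2⟩
    refine ⟨c, hc, ENNReal.inv_two_le_ofReal (hβhalf _ fun k => ?_)⟩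
    simpa [ν, sub_sub] using (hclose k).le
  calc ∑' j, {j | ∀ k, lamb j k ∈ Icc (μ k) (μ k + 1)}.indicator w j
      ≤ 2 * ∑ c ∈ T, ∑' j, ENNReal.ofReal (β (lamb j - ν c)) * w j :=
        tsum_indicator_le_two_mul_sum_tsum T _ w hcover
    _ ≤ 2 * ∑ _c ∈ T, ENNReal.ofReal (K * ∏ k, (1 + |μ k|) ^ m k) :=
        mul_le_mul_right (Finset.sum_le_sum hsmooth_ν) 2
    _ = ENNReal.ofReal (2 * T.card * K * ∏ k, (1 + |μ k|) ^ m k) := by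
        rw [Finset.sum_const, nsmul_eq_mul, ← mul_assoc, mul_assoc (2 * (T.card : ℝ)),
          ENNReal.ofReal_mul (p := 2 * (T.card : ℝ)) (by positivity),
          ENNReal.ofReal_mul zero_le_two, ENNReal.ofReal_ofNat, ENNReal.ofReal_natCast]

open scoped ENNReal in
/-- Abstract (sequence-level) content of Lemma 7.2 of the paper: bounds on a smoothed
spectral sum imply unit-box bounds for the sharp spectral sum. -/
theorem smoothed_to_unit_box_bound (n : ℕ) (hn : 1 ≤ n)
    (lamb : ℕ → EuclideanSpace ℝ (Fin n)) (w : ℕ → ℝ≥0∞)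
    (β : EuclideanSpace ℝ (Fin n) → ℝ) (hβ : ∀ τ, 0 ≤ β τ)
    (ε₀ : ℝ) (hε₀ : 0 < ε₀)
    (hβhalf : ∀ τ : EuclideanSpace ℝ (Fin n), (∀ k, |τ k| ≤ ε₀) → (1 / 2 : ℝ) ≤ β τ)
    (S : Set (EuclideanSpace ℝ (Fin n))) (m : Fin n → ℝ) (hm : ∀ k, 0 ≤ m k)
    (C : ℝ) (hC : 0 < C)
    (hsmooth : ∀ μ : EuclideanSpace ℝ (Fin n), Metric.infDist μ S ≤ Real.sqrt n →
      (∑' j, ENNReal.ofReal (β (lamb j - μ)) * w j) ≤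
        ENNReal.ofReal (C * ∏ k, (1 + |μ k|) ^ (m k))) :
    ∃ C' > (0 : ℝ), ∀ μ ∈ S,
      (∑' j, Set.indicator {j : ℕ | ∀ k, lamb j k ∈ Set.Icc (μ k) (μ k + 1)} w j) ≤
        ENNReal.ofReal (C' * ∏ k, (1 + |μ k|) ^ (m k)) :=
  smoothed_to_unit_box_bound_general n lamb w β ε₀ hε₀ hβhalf S m hm C hC hsmooth
end

section
/- Let n ≥ 1, let (λ̄_j)_{j∈ℕ} be a sequence in ℝⁿ with components λ̄_j = (λ_j^{(1)},…,λ_j^{(n)}), and let (w_j)_{j∈ℕ} be nonnegative reals. Let m̄ = (m₁,…,mₙ) ∈ [0,∞)ⁿ and C > 0 be such that ∑_{j : λ̄_j ∈ R_{s̄}} w_j ≤ C ∏_{k=1}^n (1+|s_k|)^{m_k} for every s̄ ∈ ℤⁿ. Fix k ∈ {1,…,n}, fix c̄ = (c₁,…,cₙ) ∈ ℝⁿ with c_ℓ ≠ 0 for every ℓ, and fix an integer N ≥ |m̄| + 2. Then there exists C′ > 0 such that for all λ ≥ 1, ∑_{j=0}^∞ (∏_{ℓ≠k} 𝟙_{[−λ|c_ℓ|,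 λ|c_ℓ|]}(λ_j^{(ℓ)})) · (1 + | |λ_j^{(k)}| − λ|c_k| |)^{−N} · w_j ≤ C′ λ^{|m̄| + n − 1}. -/
/-!
Sort the points `λ̄_j` by the unit box `⌊λ̄_j⌋ = s̄ ∈ ℤⁿ` containing them. On that box the cutoff
in the coordinates `ℓ ≠ k` and the decay factor in the coordinate `k` are dominated by a product
`∏_ℓ g_ℓ(s_ℓ)` of one-variable functions (moving the point by at most `1` costs a factor `2^N` in
the decay factor), so the box hypothesis bounds the sum by `C ∏_ℓ ∑_{z ∈ ℤ} g_ℓ(z) (1 + |z|)^{m_ℓ}`.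
For `ℓ ≠ k` this is a sum over the `O(λ)` integers of `[-λ|c_ℓ| - 1, λ|c_ℓ|]`, hence
`O(λ^{m_ℓ + 1})`. For `ℓ = k`, writing `d = ||z| - λ|c_k||`, we have
`1 + |z| ≤ (1 + λ|c_k|)(1 + d)`, and `N ≥ m_k + 2` leaves the factor `(1 + d)^{-2}`, whose sum
over `z ∈ ℤ` is bounded uniformly in `λ`; this coordinate contributes `O(λ^{m_k})`.
-/

open scoped ENNReal
open Finset

namespace ENNReal

theorem tsum_fin_pi_prod_eq_prod_tsum {α : Type*} :
    ∀ {n : ℕ} (f : Fin n → α → ℝ≥0∞),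
      ∑' s : Fin n → α, ∏ i, f i (s i) = ∏ i, ∑' a, f i a
  | 0, f => by simp
  | n + 1, f => by
    rw [← (Fin.consEquiv fun _ => α).tsum_eq, ENNReal.tsum_prod', Fin.prod_univ_succ,
      ← tsum_fin_pi_prod_eq_prod_tsum]
    simp [Fin.consEquiv, Fin.prod_univ_succ, ENNReal.tsum_mul_left, ENNReal.tsum_mul_right]

end ENNReal

theorem one_add_abs_le_two_mul_one_add_abs {x y : ℝ} (h : |x - y| ≤ 1) :
    1 + |y| ≤ 2 * (1 + |x|) := by
  have := abs_sub_abs_le_abs_sub y x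
  rw [abs_sub_comm] at h
  linarith [abs_nonneg x]

theorem inv_one_add_abs_pow_le_two_pow_mul {x y : ℝ} (h : |x - y| ≤ 1) (N : ℕ) :
    ((1 + |x|) ^ N)⁻¹ ≤ 2 ^ N * ((1 + |y|) ^ N)⁻¹ := by
  calc ((1 + |x|) ^ N)⁻¹ = 2 ^ N * ((2 * (1 + |x|)) ^ N)⁻¹ := by
        rw [mul_pow, mul_inv, ← mul_assoc, mul_inv_cancel₀ (by positivity), one_mul]
    _ ≤ 2 ^ N * ((1 + |y|) ^ N)⁻¹ := by
        gcongr
        exact one_add_abs_le_two_mul_one_add_abs h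

theorem rpow_mul_inv_pow_le {x m : ℝ} {N : ℕ} (hx : 1 ≤ x) (hN : m + 2 ≤ N) :
    x ^ m * (x ^ N)⁻¹ ≤ (x ^ 2)⁻¹ := by
  have hx0 : 0 < x := by linarith
  rw [← Real.rpow_natCast, ← Real.rpow_natCast x 2, ← Real.rpow_neg hx0.le,
    ← Real.rpow_neg hx0.le, ← Real.rpow_add hx0]
  exact Real.rpow_le_rpow_of_exponent_le hx (by push_cast; linarith)

theorem add_mul_rpow_le {p b lam m : ℝ} (hp : 0 ≤ p) (hb : 0 ≤ b) (hlam : 1 ≤ lam)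
    (hm : 0 ≤ m) : (p + lam * b) ^ m ≤ (p + b) ^ m * lam ^ m := by
  rw [← Real.mul_rpow (by positivity) (by positivity)]
  exact Real.rpow_le_rpow (by positivity) (by nlinarith) hm

theorem summable_inv_one_add_abs_sq : Summable fun z : ℤ => ((1 + |(z : ℝ)|) ^ 2)⁻¹ := by
  have h := (Real.summable_one_div_nat_add_rpow 1 2).mpr one_lt_two
  have hnat : Summable fun n : ℕ => ((1 + (n : ℝ)) ^ 2)⁻¹ := by
    refine h.congr fun n => ?_
    rw [abs_of_nonneg (by positivity), add_comm, Real.rpow_two, one_div]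
  exact .of_nat_of_neg (by simpa using hnat) (by simpa using hnat)

theorem tsum_ofReal_inv_one_add_abs_sub_sq_le (a : ℝ) :
    ∑' z : ℤ, ENNReal.ofReal (((1 + |z - a|) ^ 2)⁻¹) ≤
      ENNReal.ofReal (4 * ∑' z : ℤ, ((1 + |(z : ℝ)|) ^ 2)⁻¹) := by
  have hfloor : |(⌊a⌋ : ℝ) - a| ≤ 1 := by
    rw [abs_sub_comm, abs_le]
    constructor <;> linarith [Int.floor_le a, Int.lt_floor_add_one a]
  calc ∑' z : ℤ, ENNReal.ofReal (((1 + |z - a|) ^ 2)⁻¹)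
      ≤ ∑' z : ℤ, ENNReal.ofReal (4 * ((1 + |((z - ⌊a⌋ : ℤ) : ℝ)|) ^ 2)⁻¹) := by
        refine ENNReal.tsum_le_tsum fun z => ENNReal.ofReal_le_ofReal ?_
        have := inv_one_add_abs_pow_le_two_pow_mul (x := z - a) (y := z - ⌊a⌋)
          (by convert hfloor using 2; ring) 2
        push_cast
        linarith
    _ = ∑' z : ℤ, ENNReal.ofReal (4 * ((1 + |(z : ℝ)|) ^ 2)⁻¹) :=
        (Equiv.subRight ⌊a⌋).tsum_eq fun z : ℤ =>
          ENNReal.ofReal (4 * ((1 + |(z : ℝ)|) ^ 2)⁻¹)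
    _ = ENNReal.ofReal (4 * ∑' z : ℤ, ((1 + |(z : ℝ)|) ^ 2)⁻¹) := by
        rw [← tsum_mul_left, ENNReal.ofReal_tsum_of_nonneg (fun z => by positivity)
          (summable_inv_one_add_abs_sq.mul_left 4)]

theorem tsum_ofReal_inv_one_add_abs_abs_sub_sq_le (a : ℝ) :
    ∑' z : ℤ, ENNReal.ofReal (((1 + |(|(z : ℝ)| - a)|) ^ 2)⁻¹) ≤
      ENNReal.ofReal (8 * ∑' z : ℤ, ((1 + |(z : ℝ)|) ^ 2)⁻¹) := by
  calc ∑' z : ℤ, ENNReal.ofReal (((1 + |(|(z : ℝ)| - a)|) ^ 2)⁻¹)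
      ≤ ∑' z : ℤ, (ENNReal.ofReal (((1 + |z - a|) ^ 2)⁻¹) +
          ENNReal.ofReal (((1 + |z - -a|) ^ 2)⁻¹)) := by
        refine ENNReal.tsum_le_tsum fun z => ?_
        rcases abs_choice (z : ℝ) with h | h <;> rw [h]
        · exact le_self_add
        · rw [show -(z : ℝ) - a = -(z - -a) by ring, abs_neg]
          exact le_add_self
    _ ≤ ENNReal.ofReal (4 * ∑' z : ℤ, ((1 + |(z : ℝ)|) ^ 2)⁻¹) +
          ENNReal.ofReal (4 * ∑' z : ℤ, ((1 + |(z : ℝ)|) ^ 2)⁻¹) := by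
        rw [ENNReal.tsum_add]
        exact add_le_add (tsum_ofReal_inv_one_add_abs_sub_sq_le a)
          (tsum_ofReal_inv_one_add_abs_sub_sq_le (-a))
    _ = ENNReal.ofReal (8 * ∑' z : ℤ, ((1 + |(z : ℝ)|) ^ 2)⁻¹) := by
        rw [← ENNReal.ofReal_add (by positivity) (by positivity)]
        ring_nf

theorem tsum_indicator_Icc_mul_rpow_le {a m : ℝ} (ha : 0 ≤ a) (hm : 0 ≤ m) :
    ∑' z : ℤ, Set.indicator (Set.Icc (-a - 1) a) (fun _ => (1 : ℝ≥0∞)) (z : ℝ) *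
        ENNReal.ofReal ((1 + |(z : ℝ)|) ^ m) ≤
      ENNReal.ofReal ((2 * a + 2) * (2 + a) ^ m) := by
  set S := Finset.Icc ⌈-a - 1⌉ ⌊a⌋
  have hmem : ∀ z : ℤ, z ∈ S ↔ (z : ℝ) ∈ Set.Icc (-a - 1) a := by
    simp [S, Int.ceil_le, Int.le_floor]
  have hcard : (#S : ℝ) ≤ 2 * a + 2 := by
    have hfloor : (0 : ℤ) ≤ ⌊a⌋ := Int.floor_nonneg.mpr ha
    have hcast : ((#S : ℤ) : ℝ) = 2 * ⌊a⌋ + 2 := by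
      rw [Int.card_Icc, Int.ceil_sub_one, Int.ceil_neg, Int.toNat_of_nonneg (by omega)]
      push_cast
      ring
    have := Int.floor_le a
    exact_mod_cast hcast.le.trans (by linarith)
  rw [tsum_eq_sum (s := S) fun z hz => by
    rw [Set.indicator_of_notMem ((hmem z).not.mp hz), zero_mul]]
  calc ∑ z ∈ S, Set.indicator (Set.Icc (-a - 1) a) (fun _ => (1 : ℝ≥0∞)) (z : ℝ) *
        ENNReal.ofReal ((1 + |(z : ℝ)|) ^ m)
      ≤ ∑ z ∈ S, ENNReal.ofReal ((2 + a) ^ m) := by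
        refine sum_le_sum fun z hz => ?_
        have hz := (hmem z).mp hz
        rw [Set.indicator_of_mem hz, one_mul]
        refine ENNReal.ofReal_le_ofReal (Real.rpow_le_rpow (by positivity) ?_ hm)
        have : |(z : ℝ)| ≤ a + 1 := abs_le.mpr ⟨by linarith [hz.1], by linarith [hz.2]⟩
        linarith
    _ = ENNReal.ofReal (#S * (2 + a) ^ m) := by
        rw [sum_const, nsmul_eq_mul, ENNReal.ofReal_mul (by positivity), ENNReal.ofReal_natCast]
    _ ≤ ENNReal.ofReal ((2 * a + 2) * (2 + a) ^ m) := by gcongr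

theorem tsum_ofReal_inv_pow_mul_rpow_le {a m : ℝ} {N : ℕ} (ha : 0 ≤ a) (hm : 0 ≤ m)
    (hN : m + 2 ≤ N) :
    ∑' z : ℤ, ENNReal.ofReal (((1 + |(|(z : ℝ)| - a)|) ^ N)⁻¹) *
        ENNReal.ofReal ((1 + |(z : ℝ)|) ^ m) ≤
      ENNReal.ofReal ((1 + a) ^ m * (8 * ∑' z : ℤ, ((1 + |(z : ℝ)|) ^ 2)⁻¹)) := by
  have hpoint : ∀ z : ℤ, ((1 + |(|(z : ℝ)| - a)|) ^ N)⁻¹ * (1 + |(z : ℝ)|) ^ m ≤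
      (1 + a) ^ m * ((1 + |(|(z : ℝ)| - a)|) ^ 2)⁻¹ := by
    intro z
    set d := |(|(z : ℝ)| - a)|
    have hd : 1 ≤ 1 + d := le_add_of_nonneg_right (abs_nonneg _)
    have hz : 1 + |(z : ℝ)| ≤ (1 + a) * (1 + d) := by
      have := le_abs_self (|(z : ℝ)| - a)
      nlinarith [abs_nonneg (|(z : ℝ)| - a)]
    calc ((1 + d) ^ N)⁻¹ * (1 + |(z : ℝ)|) ^ m
        ≤ ((1 + d) ^ N)⁻¹ * ((1 + a) ^ m * (1 + d) ^ m) := by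
          rw [← Real.mul_rpow (by positivity) (by positivity)]
          gcongr
      _ = (1 + a) ^ m * ((1 + d) ^ m * ((1 + d) ^ N)⁻¹) := by ring
      _ ≤ (1 + a) ^ m * ((1 + d) ^ 2)⁻¹ := by
          gcongr
          exact rpow_mul_inv_pow_le hd hN
  calc ∑' z : ℤ, ENNReal.ofReal (((1 + |(|(z : ℝ)| - a)|) ^ N)⁻¹) *
        ENNReal.ofReal ((1 + |(z : ℝ)|) ^ m)
      ≤ ∑' z : ℤ, ENNReal.ofReal ((1 + a) ^ m) *
          ENNReal.ofReal (((1 + |(|(z : ℝ)| - a)|) ^ 2)⁻¹) := by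
        refine ENNReal.tsum_le_tsum fun z => ?_
        rw [← ENNReal.ofReal_mul (by positivity), ← ENNReal.ofReal_mul (by positivity)]
        exact ENNReal.ofReal_le_ofReal (hpoint z)
    _ ≤ ENNReal.ofReal ((1 + a) ^ m) *
          ENNReal.ofReal (8 * ∑' z : ℤ, ((1 + |(z : ℝ)|) ^ 2)⁻¹) := by
        rw [ENNReal.tsum_mul_left]
        gcongr
        exact tsum_ofReal_inv_one_add_abs_abs_sub_sq_le a
    _ = ENNReal.ofReal ((1 + a) ^ m * (8 * ∑' z : ℤ, ((1 + |(z : ℝ)|) ^ 2)⁻¹)) :=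
        (ENNReal.ofReal_mul (by positivity)).symm

theorem tsum_mul_le_prod_tsum_of_unit_box_le {α : Type*} {n : ℕ} (x : α → Fin n → ℝ)
    (w : α → ℝ≥0∞) (F : (Fin n → ℝ) → ℝ≥0∞) (g : Fin n → ℤ → ℝ≥0∞) {C : ℝ} (hC : 0 ≤ C)
    {p : Fin n → ℤ → ℝ} (hp : ∀ l z, 0 ≤ p l z) (hFg : ∀ y, F y ≤ ∏ l, g l ⌊y l⌋)
    (hbox : ∀ s : Fin n → ℤ,
      ∑' j, Set.indicator {j | ∀ l, x j l ∈ Set.Icc (s l : ℝ) (s l + 1)} w j ≤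
        ENNReal.ofReal (C * ∏ l, p l (s l))) :
    ∑' j, F (x j) * w j ≤ ENNReal.ofReal C * ∏ l, ∑' z, g l z * ENNReal.ofReal (p l z) := by
  calc ∑' j, F (x j) * w j
      ≤ ∑' j, (∏ l, g l ⌊x j l⌋) * w j := ENNReal.tsum_le_tsum fun j => by gcongr; exact hFg _
    _ = ∑' s : Fin n → ℤ, (∏ l, g l (s l)) *
          ∑' j, Set.indicator {j | ∀ l, ⌊x j l⌋ = s l} w j := by
        simp_rw [← ENNReal.tsum_mul_left]
        rw [ENNReal.tsum_comm]
        refine tsum_congr fun j => ?_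
        rw [tsum_eq_single (fun l => ⌊x j l⌋) fun s hs => ?_]
        · rw [Set.indicator_of_mem (Set.mem_ofPred.mpr fun l => rfl)]
        · rw [Set.indicator_of_notMem fun h => hs (funext (Set.mem_ofPred.mp h)).symm,
            mul_zero]
    _ ≤ ∑' s : Fin n → ℤ, (∏ l, g l (s l)) *
          ENNReal.ofReal (C * ∏ l, p l (s l)) := by
        gcongr with s
        refine le_trans (ENNReal.tsum_le_tsum fun j =>
          Set.indicator_le_indicator_of_subset (fun j hj l => ?_) (fun _ => zero_le) j) (hbox s)
        rw [← hj l]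
        exact ⟨Int.floor_le _, (Int.lt_floor_add_one _).le⟩
    _ = ENNReal.ofReal C * ∏ l, ∑' z, g l z * ENNReal.ofReal (p l z) := by
        rw [← ENNReal.tsum_fin_pi_prod_eq_prod_tsum, ← ENNReal.tsum_mul_left]
        refine tsum_congr fun s => ?_
        rw [ENNReal.ofReal_mul hC, ENNReal.ofReal_prod_of_nonneg fun l _ => hp l (s l),
          prod_mul_distrib]
        ring

-- The `g_ℓ` of the sketch above, with `a_ℓ = λ|c_ℓ|`.
noncomputable def unitBoxMajorant {n : ℕ} (k : Fin n) (a : Fin n → ℝ) (N : ℕ) (l : Fin n)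
    (z : ℤ) : ℝ≥0∞ :=
  if l = k then 2 ^ N * ENNReal.ofReal (((1 + |(|(z : ℝ)| - a k)|) ^ N)⁻¹)
  else Set.indicator (Set.Icc (-a l - 1) (a l)) (fun _ => 1) (z : ℝ)

theorem le_prod_unitBoxMajorant_floor {n : ℕ} (k : Fin n) (a : Fin n → ℝ) (N : ℕ)
    (y : Fin n → ℝ) :
    (∏ l ∈ univ.erase k, Set.indicator (Set.Icc (-a l) (a l)) (fun _ => (1 : ℝ≥0∞)) (y l)) *
        ENNReal.ofReal (((1 + |(|y k| - a k)|) ^ N)⁻¹) ≤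
      ∏ l, unitBoxMajorant k a N l ⌊y l⌋ := by
  rw [← mul_prod_erase univ _ (mem_univ k), mul_comm]
  gcongr with l hl
  · rw [unitBoxMajorant, if_pos rfl, ← ENNReal.ofReal_ofNat 2, ← ENNReal.ofReal_pow zero_le_two,
      ← ENNReal.ofReal_mul (by positivity)]
    refine ENNReal.ofReal_le_ofReal (inv_one_add_abs_pow_le_two_pow_mul ?_ N)
    rw [sub_sub_sub_cancel_right]
    refine (abs_abs_sub_abs_le_abs_sub _ _).trans ?_
    rw [abs_le]
    constructor <;> linarith [Int.floor_le (y k), Int.lt_floor_add_one (y k)]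
  · rw [unitBoxMajorant, if_neg (ne_of_mem_erase hl)]
    by_cases hy : y l ∈ Set.Icc (-a l) (a l)
    · rw [Set.indicator_of_mem hy, Set.indicator_of_mem]
      exact ⟨by linarith [Int.lt_floor_add_one (y l), hy.1], (Int.floor_le _).trans hy.2⟩
    · simp [Set.indicator_of_notMem hy]

theorem exists_tsum_unitBoxMajorant_mul_le {n : ℕ} (k : Fin n) (c m : Fin n → ℝ) (N : ℕ)
    (hm : ∀ l, 0 ≤ m l) (hN : m k + 2 ≤ N) (l : Fin n) :
    ∃ K > (0 : ℝ), ∀ lam : ℝ, 1 ≤ lam →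
      ∑' z : ℤ, unitBoxMajorant k (fun i => lam * |c i|) N l z *
          ENNReal.ofReal ((1 + |(z : ℝ)|) ^ (m l)) ≤
        ENNReal.ofReal (K * lam ^ (m l + if l = k then 0 else 1)) := by
  by_cases hl : l = k
  · subst hl
    set T := ∑' z : ℤ, ((1 + |(z : ℝ)|) ^ 2)⁻¹
    have hT : 0 < T := summable_inv_one_add_abs_sq.tsum_pos (fun z => by positivity) 0 (by simp)
    refine ⟨2 ^ N * ((1 + |c l|) ^ m l * (8 * T)), by positivity, fun lam hlam => ?_⟩
    calc ∑' z : ℤ, unitBoxMajorant l (fun i => lam * |c i|) N l z *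
          ENNReal.ofReal ((1 + |(z : ℝ)|) ^ m l)
        = 2 ^ N * ∑' z : ℤ, ENNReal.ofReal (((1 + |(|(z : ℝ)| - lam * |c l|)|) ^ N)⁻¹) *
          ENNReal.ofReal ((1 + |(z : ℝ)|) ^ m l) := by
          simp only [unitBoxMajorant, if_pos, mul_assoc, ENNReal.tsum_mul_left]
      _ ≤ 2 ^ N * ENNReal.ofReal ((1 + lam * |c l|) ^ m l * (8 * T)) := by
          gcongr
          exact tsum_ofReal_inv_pow_mul_rpow_le (by positivity) (hm l) hN
      _ ≤ 2 ^ N * ENNReal.ofReal ((1 + |c l|) ^ m l * lam ^ m l * (8 * T)) := by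
          gcongr
          exact add_mul_rpow_le zero_le_one (abs_nonneg _) hlam (hm l)
      _ = ENNReal.ofReal (2 ^ N * ((1 + |c l|) ^ m l * (8 * T)) *
            lam ^ (m l + if l = l then 0 else 1)) := by
          rw [if_pos rfl, add_zero, ← ENNReal.ofReal_ofNat 2, ← ENNReal.ofReal_pow zero_le_two,
            ← ENNReal.ofReal_mul (by positivity)]
          ring_nf
  · refine ⟨(2 * |c l| + 2) * (2 + |c l|) ^ m l, by positivity, fun lam hlam => ?_⟩
    simp only [unitBoxMajorant, if_neg hl]
    calc ∑' z : ℤ, Set.indicator (Set.Icc (-(lam * |c l|) - 1) (lam * |c l|)) (fun _ => 1)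
          (z : ℝ) * ENNReal.ofReal ((1 + |(z : ℝ)|) ^ m l)
        ≤ ENNReal.ofReal ((2 * (lam * |c l|) + 2) * (2 + lam * |c l|) ^ m l) :=
          tsum_indicator_Icc_mul_rpow_le (by positivity) (hm l)
      _ ≤ ENNReal.ofReal ((2 * |c l| + 2) * (2 + |c l|) ^ m l * lam ^ (m l + 1)) := by
          refine ENNReal.ofReal_le_ofReal ?_
          rw [Real.rpow_add_one (by positivity), show (2 * |c l| + 2) * (2 + |c l|) ^ m l *
            (lam ^ m l * lam) = ((2 * |c l| + 2) * lam) * ((2 + |c l|) ^ m l * lam ^ m l) by ring]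
          gcongr
          · nlinarith [abs_nonneg (c l)]
          · exact add_mul_rpow_le zero_le_two (abs_nonneg _) hlam (hm l)

theorem box_counting_estimate_general (n : ℕ)
    (lamb : ℕ → Fin n → ℝ) (w : ℕ → ℝ≥0∞)
    (m : Fin n → ℝ) (hm : ∀ k, 0 ≤ m k) (C : ℝ) (hC : 0 < C)
    (hbox : ∀ s : Fin n → ℤ,
      (∑' j, Set.indicator
          {j : ℕ | ∀ k, lamb j k ∈ Set.Icc ((s k : ℝ)) ((s k : ℝ) + 1)} w j) ≤
        ENNReal.ofReal (C * ∏ k, (1 + |(s k : ℝ)|) ^ (m k)))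
    (k : Fin n) (c : Fin n → ℝ)
    (N : ℕ) (hN : (∑ i, m i) + 2 ≤ (N : ℝ)) :
    ∃ C' > (0 : ℝ), ∀ lam : ℝ, 1 ≤ lam →
      (∑' j, (∏ l ∈ Finset.univ.erase k,
            Set.indicator (Set.Icc (-(lam * |c l|)) (lam * |c l|))
              (fun _ => (1 : ℝ≥0∞)) (lamb j l)) *
          ENNReal.ofReal (((1 + |(|lamb j k| - lam * |c k|)|) ^ N)⁻¹) * w j) ≤
        ENNReal.ofReal (C' * lam ^ ((∑ i, m i) + n - 1)) := by
  have hNk : m k + 2 ≤ N :=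
    (add_le_add_left (single_le_sum (fun i _ => hm i) (mem_univ k)) 2).trans hN
  choose K hK_pos hK using exists_tsum_unitBoxMajorant_mul_le k c m N hm hNk
  have hexp : ∑ l, (m l + if l = k then 0 else 1) = (∑ i, m i) + n - 1 := by
    simp only [sum_add_distrib, sum_ite, sum_const_zero, filter_ne', sum_const, mem_univ,
      card_erase_of_mem, card_univ, Fintype.card_fin, nsmul_eq_mul, Nat.cast_sub k.pos,
      Nat.cast_one, mul_one, zero_add]
    ring
  refine ⟨C * ∏ l, K l, mul_pos hC (prod_pos fun l _ => hK_pos l), fun lam hlam => ?_⟩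
  calc _ ≤ ENNReal.ofReal C * ∏ l, ∑' z, unitBoxMajorant k (fun i => lam * |c i|) N l z *
          ENNReal.ofReal ((1 + |(z : ℝ)|) ^ (m l)) :=
        tsum_mul_le_prod_tsum_of_unit_box_le lamb w _ _ hC.le (fun _ _ => by positivity)
          (le_prod_unitBoxMajorant_floor k _ N) hbox
    _ ≤ ENNReal.ofReal C * ∏ l, ENNReal.ofReal (K l * lam ^ (m l + if l = k then 0 else 1)) := by
        gcongr with l
        exact hK l lam hlam
    _ = ENNReal.ofReal ((C * ∏ l, K l) * lam ^ ((∑ i, m i) + n - 1)) := by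
        rw [← ENNReal.ofReal_prod_of_nonneg fun l _ => (mul_pos (hK_pos l) (by positivity)).le,
          ← ENNReal.ofReal_mul hC.le, prod_mul_distrib, ← Real.rpow_sum_of_pos (by linarith),
          hexp, mul_assoc]

open scoped ENNReal in
/-- Central counting estimate in the proof of the paper's Tauberian Proposition 7.1:
unit-box bounds on the weighted joint spectral counting function imply that the sum with
the sharp cutoff in all but one variable and a polynomially decaying factor in the
remaining variable is `O(λ^{|m|+n-1})`. -/
theorem box_counting_estimate (n : ℕ) (hn : 1 ≤ n)
    (lamb : ℕ → Fin n → ℝ) (w : ℕ → ℝ≥0∞)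
    (m : Fin n → ℝ) (hm : ∀ k, 0 ≤ m k) (C : ℝ) (hC : 0 < C)
    (hbox : ∀ s : Fin n → ℤ,
      (∑' j, Set.indicator
          {j : ℕ | ∀ k, lamb j k ∈ Set.Icc ((s k : ℝ)) ((s k : ℝ) + 1)} w j) ≤
        ENNReal.ofReal (C * ∏ k, (1 + |(s k : ℝ)|) ^ (m k)))
    (k : Fin n) (c : Fin n → ℝ) (hc : ∀ l, c l ≠ 0)
    (N : ℕ) (hN : (∑ i, m i) + 2 ≤ (N : ℝ)) :
    ∃ C' > (0 : ℝ), ∀ lam : ℝ, 1 ≤ lam →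
      (∑' j, (∏ l ∈ Finset.univ.erase k,
            Set.indicator (Set.Icc (-(lam * |c l|)) (lam * |c l|))
              (fun _ => (1 : ℝ≥0∞)) (lamb j l)) *
          ENNReal.ofReal (((1 + |(|lamb j k| - lam * |c k|)|) ^ N)⁻¹) * w j) ≤
        ENNReal.ofReal (C' * lam ^ ((∑ i, m i) + n - 1)) :=
  box_counting_estimate_general n lamb w m hm C hC hbox k c N hN
end

section
/- Let n ≥ 1, let U ⊆ ℝⁿ × (ℝⁿ ∖ {0}) be open and conic in the ξ-variable, and let p₁,…,pₙ : U → ℝ be continuously differentiable and positively homogeneous of degree 1 in ξ, i.e. p_i(x, rξ) = r p_i(x, ξ) for all r > 0 and (x,ξ) ∈ U. Let (x₀,ξ₀) ∈ U and suppose that {p_i, p_ℓ}(x₀,ξ₀) = 0 for all i, ℓ ∈ {1,…,n}, and that ∑_{i=1}^n p_i(x₀,ξ₀)² > 0. Then the radial vector (0, ξ₀) ∈ ℝⁿ × ℝⁿ does not lie in the linear span of the n Hamiltonian vectors H_{p_1}(x₀,ξ₀), …, H_{p_n}(x₀,ξ₀). -/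
/-- Partial derivative in the `x_k` direction of a function on phase space `ℝⁿ × ℝⁿ`. -/
noncomputable def pDx {n : ℕ} (p : (Fin n → ℝ) × (Fin n → ℝ) → ℝ) (k : Fin n)
    (z : (Fin n → ℝ) × (Fin n → ℝ)) : ℝ :=
  fderiv ℝ p z (Pi.single k 1, 0)

/-- Partial derivative in the `ξ_k` direction of a function on phase space `ℝⁿ × ℝⁿ`. -/
noncomputable def pDxi {n : ℕ} (p : (Fin n → ℝ) × (Fin n → ℝ) → ℝ) (k : Fin n)
    (z : (Fin n → ℝ) × (Fin n → ℝ)) : ℝ :=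
  fderiv ℝ p z (0, Pi.single k 1)

/-- Poisson bracket `{p,q} = ∑ₖ ∂_{ξ_k}p ∂_{x_k}q − ∂_{x_k}p ∂_{ξ_k}q` on `ℝⁿ × ℝⁿ`. -/
noncomputable def poissonBracket {n : ℕ} (p q : (Fin n → ℝ) × (Fin n → ℝ) → ℝ)
    (z : (Fin n → ℝ) × (Fin n → ℝ)) : ℝ :=
  ∑ k, (pDxi p k z * pDx q k z - pDx p k z * pDxi q k z)

/-- Hamiltonian vector field `H_p = (∇_ξ p, −∇_x p)` on `ℝⁿ × ℝⁿ`. -/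
noncomputable def hamVF {n : ℕ} (p : (Fin n → ℝ) × (Fin n → ℝ) → ℝ)
    (z : (Fin n → ℝ) × (Fin n → ℝ)) : (Fin n → ℝ) × (Fin n → ℝ) :=
  (fun k => pDxi p k z, fun k => -pDx p k z)

/-!
Each differential `dp_l(x₀,ξ₀)` kills every Hamiltonian vector, since `dp_l(H_{p_i}) = {p_i, p_l} = 0`,
hence kills their span. By Euler's identity for degree-1 homogeneity, `dp_l(x₀,ξ₀)(0,ξ₀) = p_l(x₀,ξ₀)`,
so if `(0,ξ₀)` were in the span all `p_l(x₀,ξ₀)` would vanish, contradicting `∑ p_l(x₀,ξ₀)² > 0`.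
-/

theorem ContinuousLinearMap.apply_prod_eq_sum {n : ℕ}
    (L : ((Fin n → ℝ) × (Fin n → ℝ)) →L[ℝ] ℝ) (a b : Fin n → ℝ) :
    L (a, b) = ∑ k, a k * L (Pi.single k 1, 0) + ∑ k, b k * L (0, Pi.single k 1) := by
  have hab : (a, b) = ∑ k, a k • ((Pi.single k 1 : Fin n → ℝ), (0 : Fin n → ℝ))
      + ∑ k, b k • ((0 : Fin n → ℝ), (Pi.single k 1 : Fin n → ℝ)) := by
    ext j <;> simp [Prod.fst_sum, Prod.snd_sum, Pi.single_apply]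
  rw [hab, map_add, map_sum, map_sum]
  simp only [map_smul, smul_eq_mul]

theorem fderiv_apply_hamVF {n : ℕ} (p q : (Fin n → ℝ) × (Fin n → ℝ) → ℝ)
    (z : (Fin n → ℝ) × (Fin n → ℝ)) :
    fderiv ℝ q z (hamVF p z) = poissonBracket p q z := by
  rw [hamVF, ContinuousLinearMap.apply_prod_eq_sum, poissonBracket, ← Finset.sum_add_distrib]
  exact Finset.sum_congr rfl fun k _ => by simp only [pDx, pDxi]; ring

theorem fderiv_apply_radial_eq_of_homogeneous {E F : Type*} [NormedAddCommGroup E]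
    [NormedSpace ℝ E] [NormedAddCommGroup F] [NormedSpace ℝ F] {p : E × F → ℝ} {z : E × F}
    (hp : DifferentiableAt ℝ p z) (hhom : ∀ r : ℝ, 0 < r → p (z.1, r • z.2) = r * p z) :
    fderiv ℝ p z (0, z.2) = p z := by
  have hray : HasDerivAt (fun r : ℝ => (z.1, r • z.2)) (0, z.2) 1 :=
    (hasDerivAt_const _ _).prodMk (by simpa using (hasDerivAt_id (1 : ℝ)).smul_const z.2)
  have hcomp : HasDerivAt (fun r : ℝ => p (z.1, r • z.2)) (fderiv ℝ p z (0, z.2)) 1 := by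
    refine HasFDerivAt.comp_hasDerivAt (1 : ℝ) ?_ hray
    simpa using hp.hasFDerivAt
  have hlin : HasDerivAt (fun r : ℝ => p (z.1, r • z.2)) (p z) 1 := by
    have hline : HasDerivAt (fun r : ℝ => r * p z) (p z) 1 := by
      simpa using (hasDerivAt_id (1 : ℝ)).mul_const (p z)
    refine hline.congr_of_eventuallyEq ?_
    filter_upwards [eventually_gt_nhds one_pos] with r hr using hhom r hr
  exact hcomp.unique hlin

theorem radial_not_in_span_general (n : ℕ)
    (U : Set ((Fin n → ℝ) × (Fin n → ℝ))) (hUopen : IsOpen U)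
    (p : Fin n → (Fin n → ℝ) × (Fin n → ℝ) → ℝ)
    (hp : ∀ i, ContDiffOn ℝ 1 (p i) U)
    (hhom : ∀ i, ∀ z ∈ U, ∀ r : ℝ, 0 < r → p i (z.1, r • z.2) = r * p i z)
    (x₀ ξ₀ : Fin n → ℝ) (hz : (x₀, ξ₀) ∈ U)
    (hpois : ∀ i l, poissonBracket (p i) (p l) (x₀, ξ₀) = 0)
    (hell : 0 < ∑ i, (p i (x₀, ξ₀)) ^ 2) :
    ((0 : Fin n → ℝ), ξ₀) ∉
      Submodule.span ℝ (Set.range fun i => hamVF (p i) (x₀, ξ₀)) := by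
  intro hmem
  have hvanish (l : Fin n) : p l (x₀, ξ₀) = 0 := by
    have hdiff : DifferentiableAt ℝ (p l) (x₀, ξ₀) :=
      ((hp l).contDiffAt (hUopen.mem_nhds hz)).differentiableAt one_ne_zero
    have hspan : Submodule.span ℝ (Set.range fun i => hamVF (p i) (x₀, ξ₀)) ≤
        LinearMap.ker (fderiv ℝ (p l) (x₀, ξ₀)).toLinearMap := by
      rw [Submodule.span_le]
      rintro - ⟨i, rfl⟩
      exact (fderiv_apply_hamVF _ _ _).trans (hpois i l)
    rw [← fderiv_apply_radial_eq_of_homogeneous hdiff (hhom l _ hz)]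
    exact hspan hmem
  simp [hvanish] at hell

/-- Transversality of the radial vector field, from the proof of Proposition 4.2 of the
paper: for degree-1 homogeneous symbols that Poisson commute at `(x₀,ξ₀)` and satisfy the
ellipticity condition `∑ p_i(x₀,ξ₀)² > 0`, the radial vector `(0,ξ₀)` is not in the span
of the Hamiltonian vectors `H_{p_1}(x₀,ξ₀), …, H_{p_n}(x₀,ξ₀)`. -/
theorem radial_not_in_span (n : ℕ) (hn : 1 ≤ n)
    (U : Set ((Fin n → ℝ) × (Fin n → ℝ))) (hUopen : IsOpen U)
    (hU0 : ∀ z ∈ U, z.2 ≠ 0)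
    (hUconic : ∀ z ∈ U, ∀ r : ℝ, 0 < r → (z.1, r • z.2) ∈ U)
    (p : Fin n → (Fin n → ℝ) × (Fin n → ℝ) → ℝ)
    (hp : ∀ i, ContDiffOn ℝ 1 (p i) U)
    (hhom : ∀ i, ∀ z ∈ U, ∀ r : ℝ, 0 < r → p i (z.1, r • z.2) = r * p i z)
    (x₀ ξ₀ : Fin n → ℝ) (hz : (x₀, ξ₀) ∈ U)
    (hpois : ∀ i l, poissonBracket (p i) (p l) (x₀, ξ₀) = 0)
    (hell : 0 < ∑ i, (p i (x₀, ξ₀)) ^ 2) :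
    ((0 : Fin n → ℝ), ξ₀) ∉
      Submodule.span ℝ (Set.range fun i => hamVF (p i) (x₀, ξ₀)) :=
  radial_not_in_span_general n U hUopen p hp hhom x₀ ξ₀ hz hpois hell
end
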